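/- arXiv:2006.04770 — 3 statements merged into one kernel-verified Lean document; each statement's English description precedes it below -/
import Mathlib

section
/- Fix λ > 0 and p > 1, and set I = λ^q where q = p/(p−1) is the conjugate exponent of p. Then (α, ψ) is a positive solution of the constrained problem (P)_λ if and only if (γ, v) := (λ^{1/(p−1)} α, λ^{1/(p−1)}(α + λψ)) is a positive solution of the free boundary problem (F)_I, i.e. −Δv = (v)_+^p in Ω, v = γ > 0 on ∂Ω, and −∫_{∂Ω} ∂v/∂ν = I. -/
/-!
With `c = λ^{1/(p-1)}` one has `c^p = c λ = λ^q`, so the substitution `v = c (α + λ ψ)` turns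
`-Δψ = (α + λψ)^p` into `-Δv = v₊^p` wherever `α + λψ ≥ 0`, turns `ψ = 0` on `∂Ω` into `v = γ`,
and, through the divergence theorem, turns `∫ (α + λψ)^p = 1` into the flux condition.
The one non-algebraic point is positivity in the converse direction: a solution of (F) is
superharmonic, so `v ≥ γ > 0` in `Ω` by the weak minimum principle; then `-Δv = v^p > 0`, and a
point of `Ω` with `v = γ` would be an interior minimum, where `Δv ≥ 0`. Hence `v > γ`, i.e.
`ψ > 0`. The weak minimum principle itself follows from the strict one applied to
`v - δ ‖x‖²`. In dimension 0 the Laplacian vanishes, so (F) has no solution.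
-/

open MeasureTheory Real Bornology Set

noncomputable section

/-- Euclidean space ℝ^N. -/
abbrev EN (N : ℕ) := EuclideanSpace ℝ (Fin N)

/-- The Laplacian, as the sum of second derivatives in the coordinate directions. -/
def lap {N : ℕ} (f : EN N → ℝ) (x : EN N) : ℝ :=
  ∑ i : Fin N, iteratedFDeriv ℝ 2 f x ![EuclideanSpace.single i 1, EuclideanSpace.single i 1]

/-- The average of `η` over `Ω` with respect to the weight `w`. -/
def wavg {N : ℕ} (Ω : Set (EN N)) (w η : EN N → ℝ) : ℝ :=
  (∫ x in Ω, w x * η x) / ∫ x in Ω, w x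

/-- Dirichlet energy ∫_Ω |∇φ|². -/
def dirE {N : ℕ} (Ω : Set (EN N)) (φ : EN N → ℝ) : ℝ := ∫ x in Ω, ‖fderiv ℝ φ x‖ ^ 2

/-- Admissible (nontrivial) test functions: a smooth proxy for H¹₀(Ω) ∖ {0}. -/
def testfun {N : ℕ} (Ω : Set (EN N)) (φ : EN N → ℝ) : Prop :=
  ContDiff ℝ 2 φ ∧ (∀ x ∉ Ω, φ x = 0) ∧ ∃ x ∈ Ω, φ x ≠ 0

open Filter Topology InnerProductSpace Laplacian

theorem IsLocalMin.deriv_deriv_nonneg {f : ℝ → ℝ} {x : ℝ} (hmin : IsLocalMin f x)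
    (hc : ContinuousAt f x) : 0 ≤ deriv (deriv f) x := by
  by_contra! hneg
  -- the second derivative test would make `x` also a local maximum, so `f` is locally constant
  have hmax := isLocalMax_of_deriv_deriv_neg hneg hmin.deriv_eq_zero hc
  have hconst : f =ᶠ[𝓝 x] fun _ => f x := by
    filter_upwards [hmin, hmax] with y h₁ h₂ using le_antisymm h₂ h₁
  simp [hconst.deriv.deriv_eq] at hneg

theorem IsLocalMin.iteratedFDeriv_two_nonneg {E : Type*} [NormedAddCommGroup E]
    [NormedSpace ℝ E] {f : E → ℝ} {x : E} (hmin : IsLocalMin f x) (hf : ContDiff ℝ 2 f)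
    (u : E) : 0 ≤ iteratedFDeriv ℝ 2 f x ![u, u] := by
  have hline : ∀ t : ℝ, HasDerivAt (fun s : ℝ => x + s • u) u t := fun t => by
    simpa using ((hasDerivAt_id t).smul_const u).const_add x
  have hderiv : deriv (fun t : ℝ => f (x + t • u)) = fun t => fderiv ℝ f (x + t • u) u := by
    ext t
    exact ((hf.differentiable two_ne_zero _).hasFDerivAt.comp_hasDerivAt t (hline t)).deriv
  have hderiv2 :
      deriv (fun t : ℝ => fderiv ℝ f (x + t • u) u) 0 = fderiv ℝ (fderiv ℝ f) x u u := by
    have h : HasFDerivAt (fderiv ℝ f) (fderiv ℝ (fderiv ℝ f) x) (x + (0 : ℝ) • u) := by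
      rw [zero_smul, add_zero]
      exact ((hf.fderiv_right le_rfl).differentiable one_ne_zero x).hasFDerivAt
    have h2 : HasDerivAt (fun t : ℝ => fderiv ℝ f (x + t • u)) (fderiv ℝ (fderiv ℝ f) x u) 0 :=
      h.comp_hasDerivAt 0 (hline 0)
    simpa using (h2.clm_apply (hasDerivAt_const 0 u)).deriv
  have hcont : Continuous fun s : ℝ => x + s • u := by fun_prop
  have hmin' : IsLocalMin (fun t : ℝ => f (x + t • u)) 0 :=
    IsLocalMin.comp_continuous (by simpa using hmin) hcont.continuousAt
  have := hmin'.deriv_deriv_nonneg (hf.continuous.comp hcont).continuousAt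
  rw [hderiv, hderiv2] at this
  simpa [iteratedFDeriv_two_apply] using this

section Laplacian

variable {E : Type*} [NormedAddCommGroup E] [InnerProductSpace ℝ E] [FiniteDimensional ℝ E]

theorem IsLocalMin.laplacian_nonneg {f : E → ℝ} {x : E} (hmin : IsLocalMin f x)
    (hf : ContDiff ℝ 2 f) : 0 ≤ Δ f x := by
  rw [laplacian_eq_iteratedFDeriv_stdOrthonormalBasis]
  exact Finset.sum_nonneg fun i _ => hmin.iteratedFDeriv_two_nonneg hf _

theorem laplacian_norm_sq (x : E) :
    Δ (fun y : E => ‖y‖ ^ 2) x = 2 * Module.finrank ℝ E := by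
  have h : ∀ u : E, iteratedFDeriv ℝ 2 (fun y : E => ‖y‖ ^ 2) x ![u, u] = 2 * ‖u‖ ^ 2 := by
    intro u
    rw [iteratedFDeriv_two_apply, fderiv_norm_sq, ← FunLike.coe_smul,
      ContinuousLinearMap.fderiv]
    simp only [Matrix.cons_val_zero, Matrix.cons_val_one, smul_apply, nsmul_eq_mul,
      Nat.cast_ofNat]
    rw [innerSL_apply_apply, real_inner_self_eq_norm_sq]
  simp [laplacian_eq_iteratedFDeriv_stdOrthonormalBasis, h, mul_comm]

theorem laplacian_eq_zero_of_subsingleton [Subsingleton E] {F : Type*} [NormedAddCommGroup F]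
    [NormedSpace ℝ F] (f : E → F) : Δ f = 0 := by
  have : IsEmpty (Fin (Module.finrank ℝ E)) := by
    rw [Module.finrank_zero_of_subsingleton]
    infer_instance
  ext x
  simp [laplacian_eq_iteratedFDeriv_stdOrthonormalBasis]

theorem laplacian_add_mul {f g : E → ℝ} {x : E} (hf : ContDiffAt ℝ 2 f x)
    (hg : ContDiffAt ℝ 2 g x) (b : ℝ) :
    Δ (fun y => f y + b * g y) x = Δ f x + b * Δ g x := by
  have h : (fun y => f y + b * g y) = f + b • g := rfl
  rw [h, hf.laplacian_add (f₂ := b • g) (hg.const_smul b), laplacian_smul b hg, smul_eq_mul]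

theorem laplacian_mul_const_add_mul {f : E → ℝ} {x : E} (hf : ContDiffAt ℝ 2 f x) (c a b : ℝ) :
    Δ (fun y => c * (a + b * f y)) x = c * b * Δ f x := by
  have h : (fun y => c * (a + b * f y)) = fun y => c * a + c * b * f y := by ext; ring
  rw [h, laplacian_add_mul contDiffAt_const hf, laplacian_const, Pi.zero_apply, zero_add]

theorem neg_laplacian_affine_eq_max_rpow_iff {f : E → ℝ} {x : E} (hf : ContDiffAt ℝ 2 f x)
    {a b c p : ℝ} (hb : b ≠ 0) (hc : 0 < c) (hcp : c ^ p = c * b) (hx : 0 ≤ a + b * f x) :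
    -Δ (fun y => c * (a + b * f y)) x = max (c * (a + b * f x)) 0 ^ p ↔
      -Δ f x = (a + b * f x) ^ p := by
  rw [max_eq_left (by positivity), mul_rpow hc.le hx, hcp, laplacian_mul_const_add_mul hf,
    ← mul_neg]
  exact mul_right_inj' (mul_ne_zero hc.ne' hb)

variable {Ω : Set E} {v : E → ℝ} {γ : ℝ}

theorem IsOpen.lt_of_laplacian_neg (hΩ : IsOpen Ω) (hΩb : IsBounded Ω) (hv : ContDiff ℝ 2 v)
    (hΔ : ∀ x ∈ Ω, Δ v x < 0) (hbd : ∀ x ∈ frontier Ω, γ ≤ v x) : ∀ x ∈ Ω, γ < v x := by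
  intro x hx
  have hnotmin : ∀ z ∈ Ω, ¬IsMinOn v (closure Ω) z := fun z hz hmin =>
    (hΔ z hz).not_ge <| (hmin.isLocalMin <|
      mem_of_superset (hΩ.mem_nhds hz) subset_closure).laplacian_nonneg hv
  obtain ⟨y, hy, hymin⟩ := hΩb.isCompact_closure.exists_isMinOn ⟨x, subset_closure hx⟩
    hv.continuous.continuousOn
  have hyfr : y ∈ frontier Ω := by
    rw [frontier, hΩ.interior_eq]
    exact ⟨hy, fun hyΩ => hnotmin y hyΩ hymin⟩
  have hyx : v y < v x := (hymin (subset_closure hx)).lt_of_ne fun h =>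
    hnotmin x hx fun z hz => h ▸ hymin hz
  exact (hbd y hyfr).trans_lt hyx

theorem IsOpen.le_of_laplacian_nonpos [Nontrivial E] (hΩ : IsOpen Ω) (hΩb : IsBounded Ω)
    (hv : ContDiff ℝ 2 v) (hΔ : ∀ x ∈ Ω, Δ v x ≤ 0) (hbd : ∀ x ∈ frontier Ω, γ ≤ v x) :
    ∀ x ∈ Ω, γ ≤ v x := by
  intro x hx
  obtain ⟨R, hR⟩ := hΩb.closure.exists_norm_le
  refine le_of_forall_pos_le_add fun ε hε => ?_
  set δ := ε / (R ^ 2 + 1)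
  have hδ : 0 < δ := by positivity
  have hw : ContDiff ℝ 2 fun y => v y + -δ * ‖y‖ ^ 2 :=
    hv.add (contDiff_const.mul (contDiff_norm_sq ℝ))
  have hΔw : ∀ y ∈ Ω, Δ (fun y => v y + -δ * ‖y‖ ^ 2) y < 0 := fun y hy => by
    rw [laplacian_add_mul hv.contDiffAt (contDiff_norm_sq ℝ).contDiffAt, laplacian_norm_sq]
    have := hΔ y hy
    have : (0 : ℝ) < Module.finrank ℝ E := Nat.cast_pos.mpr Module.finrank_pos
    nlinarith
  have hbdw : ∀ y ∈ frontier Ω, γ - ε ≤ v y + -δ * ‖y‖ ^ 2 := fun y hy => by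
    have hyR : ‖y‖ ^ 2 ≤ R ^ 2 :=
      pow_le_pow_left₀ (norm_nonneg y) (hR y (frontier_subset_closure hy)) 2
    have : δ * R ^ 2 ≤ ε := by
      rw [div_mul_eq_mul_div, div_le_iff₀ (by positivity)]
      nlinarith
    nlinarith [hbd y hy]
  have := hΩ.lt_of_laplacian_neg hΩb hw hΔw hbdw x hx
  nlinarith [sq_nonneg ‖x‖]

theorem IsOpen.lt_of_neg_laplacian_eq_max_rpow [Nontrivial E] (hΩ : IsOpen Ω)
    (hΩb : IsBounded Ω) (hv : ContDiff ℝ 2 v) {p : ℝ} (hpde : ∀ x ∈ Ω, -Δ v x = max (v x) 0 ^ p)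
    (hγ : 0 < γ) (hbd : ∀ x ∈ frontier Ω, γ ≤ v x) : ∀ x ∈ Ω, γ < v x := by
  have hge := hΩ.le_of_laplacian_nonpos hΩb hv
    (fun x hx => by linarith [hpde x hx, rpow_nonneg (le_max_right (v x) 0) p]) hbd
  refine hΩ.lt_of_laplacian_neg hΩb hv (fun x hx => ?_) hbd
  have hvx : 0 < v x := hγ.trans_le (hge x hx)
  linarith [hpde x hx, max_eq_left hvx.le ▸ rpow_pos_of_pos hvx p]

end Laplacian

theorem lap_eq_laplacian {N : ℕ} (f : EN N → ℝ) : lap f = Δ f := by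
  rw [laplacian_eq_iteratedFDeriv_orthonormalBasis f (EuclideanSpace.basisFun (Fin N) ℝ)]
  ext x
  simp [lap, EuclideanSpace.basisFun_apply]

namespace Real.HolderConjugate

variable {p q : ℝ}

theorem rpow_one_div_sub_one_mul_self (h : p.HolderConjugate q) {x : ℝ} (hx : 0 < x) :
    x ^ (1 / (p - 1)) * x = x ^ q := by
  rw [← rpow_add_one hx.ne', h.conjugate_eq]
  congr 1
  field_simp [h.sub_one_ne_zero]
  ring

theorem rpow_one_div_sub_one_rpow (h : p.HolderConjugate q) {x : ℝ} (hx : 0 ≤ x) :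
    (x ^ (1 / (p - 1))) ^ p = x ^ q := by
  rw [← rpow_mul hx, h.conjugate_eq]
  congr 1
  field_simp [h.sub_one_ne_zero]

end Real.HolderConjugate

/-- For `λ > 0`, `p > 1`, `I = λ^q` (`q` the conjugate exponent), `(α,ψ)` is a
positive solution of (P)_λ iff `(γ,v) = (λ^{1/(p-1)} α, λ^{1/(p-1)}(α + λψ))` is a positive
solution of the free boundary problem (F)_I.  The boundary flux `∫_{∂Ω} ∂v/∂ν` is
represented by a functional `flux` satisfying the divergence theorem. -/
theorem stmt1 {N : ℕ} (Ω : Set (EN N)) (hΩo : IsOpen Ω) (hΩb : IsBounded Ω)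
    (p q lam I : ℝ) (hp : 1 < p) (hq : 1 / p + 1 / q = 1) (hlam : 0 < lam)
    (hI : I = lam ^ q)
    (flux : (EN N → ℝ) → ℝ)
    (hdiv : ∀ f : EN N → ℝ, ContDiff ℝ 2 f → flux f = ∫ x in Ω, lap f x)
    (α : ℝ) (ψ : EN N → ℝ) (hψ : ContDiff ℝ 2 ψ) :
    (0 < α ∧ (∀ x ∈ Ω, -lap ψ x = (α + lam * ψ x) ^ p) ∧
      (∫ x in Ω, (α + lam * ψ x) ^ p) = 1 ∧
      (∀ x ∈ Ω, 0 < ψ x) ∧ (∀ x ∈ frontier Ω, ψ x = 0))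
    ↔
    (0 < lam ^ (1 / (p - 1)) * α ∧
      (∀ x ∈ Ω, -lap (fun y => lam ^ (1 / (p - 1)) * (α + lam * ψ y)) x
        = max (lam ^ (1 / (p - 1)) * (α + lam * ψ x)) 0 ^ p) ∧
      (∀ x ∈ frontier Ω, lam ^ (1 / (p - 1)) * (α + lam * ψ x)
        = lam ^ (1 / (p - 1)) * α) ∧
      -flux (fun y => lam ^ (1 / (p - 1)) * (α + lam * ψ y)) = I) := by
  simp only [lap_eq_laplacian] at hdiv ⊢
  have hpq : p.HolderConjugate q := holderConjugate_iff.mpr ⟨hp, by simpa only [one_div] using hq⟩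
  set c := lam ^ (1 / (p - 1))
  have hc : 0 < c := rpow_pos_of_pos hlam _
  have hcl : c * lam = lam ^ q := hpq.rpow_one_div_sub_one_mul_self hlam
  have hcp : c ^ p = c * lam := (hpq.rpow_one_div_sub_one_rpow hlam.le).trans hcl.symm
  set V := fun y => c * (α + lam * ψ y)
  have hV : ContDiff ℝ 2 V := by fun_prop
  have hpde_iff : 0 < α → ∀ x, 0 < ψ x →
      (-Δ V x = max (V x) 0 ^ p ↔ -Δ ψ x = (α + lam * ψ x) ^ p) := fun hα x hψx =>
    neg_laplacian_affine_eq_max_rpow_iff hψ.contDiffAt hlam.ne' hc hcp (by positivity)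
  have hbd_iff : ∀ x, V x = c * α ↔ ψ x = 0 := fun x => by
    simp [V, hc.ne', hlam.ne']
  have hflux_iff : (∀ x ∈ Ω, -Δ ψ x = (α + lam * ψ x) ^ p) →
      (-flux V = I ↔ ∫ x in Ω, (α + lam * ψ x) ^ p = 1) := fun hpde => by
    have : ∫ x in Ω, Δ V x = ∫ x in Ω, -(c * lam * (α + lam * ψ x) ^ p) :=
      setIntegral_congr_fun hΩo.measurableSet fun x hx => by
        rw [laplacian_mul_const_add_mul hψ.contDiffAt, ← hpde x hx]; ring
    rw [hdiv V hV, this, integral_neg, neg_neg, integral_const_mul, hI, ← hcl]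
    exact mul_eq_left₀ (mul_pos hc hlam).ne'
  constructor
  · rintro ⟨hα, hpde, hint, hpos, hbd⟩
    exact ⟨mul_pos hc hα, fun x hx => (hpde_iff hα x (hpos x hx)).2 (hpde x hx),
      fun x hx => (hbd_iff x).2 (hbd x hx), (hflux_iff hpde).2 hint⟩
  · rintro ⟨hγ, hpde, hbd, hflux⟩
    have hα : 0 < α := pos_of_mul_pos_right hγ hc.le
    have hpos : ∀ x ∈ Ω, 0 < ψ x := by
      rcases subsingleton_or_nontrivial (EN N) with hN | hN
      · rw [hdiv V hV, laplacian_eq_zero_of_subsingleton, hI] at hflux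
        simp only [Pi.zero_apply, integral_zero, neg_zero] at hflux
        exact absurd hflux (rpow_pos_of_pos hlam q).ne
      · intro x hx
        have hVx : c * α < c * (α + lam * ψ x) :=
          hΩo.lt_of_neg_laplacian_eq_max_rpow hΩb hV hpde hγ (fun y hy => (hbd y hy).ge) x hx
        have : 0 < lam * ψ x := by linarith [lt_of_mul_lt_mul_left hVx hc.le]
        exact pos_of_mul_pos_right this hlam.le
    have hpdeψ : ∀ x ∈ Ω, -Δ ψ x = (α + lam * ψ x) ^ p := fun x hx =>
      (hpde_iff hα x (hpos x hx)).1 (hpde x hx)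
    exact ⟨hα, hpdeψ, (hflux_iff hpdeψ).1 hflux, hpos, fun x hx => (hbd_iff x).1 (hbd x hx)⟩
end
end

section
/- Let (α_λ, ψ_λ) be a solution of (P)_λ and suppose λp ≤ Λ(Ω, 2p), where Λ(Ω, 2p) is the optimal constant in the Sobolev embedding H¹₀(Ω) ↪ L^{2p}(Ω), i.e. Λ(Ω,2p) = inf over nonzero w ∈ H¹₀(Ω) of ∫|∇w|² / (∫|w|^{2p})^{1/p}. Then ν_{1,λ} := inf over nonzero w ∈ H¹₀(Ω) of (∫|∇w|² − λp ∫ ρ_λ^{1/q} w²)/(∫ ρ_λ^{1/q} w²) ≥ 0. More precisely, ν_{1,λ} ≥ Λ(Ω,2p) − λp. -/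
open MeasureTheory Real Bornology Set

noncomputable section

/-! The weight `(α + λψ)^(p-1)` is the `q`-th root of the density `ρ = (α + λψ)^p`, which has
mass one, so Hölder's inequality bounds `∫ ρ^(1/q) φ²` by `‖φ‖²_{2p}`. Together with the
definition of `Λ(Ω, 2p)` as an infimum this gives `∫ |∇φ|² ≥ Λ ∫ ρ^(1/q) φ²` for every test
function. -/

def sobolevConst {N : ℕ} (Ω : Set (EN N)) (p : ℝ) : ℝ :=
  sInf {r : ℝ | ∃ φ : EN N → ℝ, testfun Ω φ ∧
    r = dirE Ω φ / (∫ x in Ω, |φ x| ^ (2 * p)) ^ (1 / p)}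

def firstEigenvalue {N : ℕ} (Ω : Set (EN N)) (w : EN N → ℝ) (m : ℝ) : ℝ :=
  sInf {r : ℝ | ∃ φ : EN N → ℝ, testfun Ω φ ∧
    r = (dirE Ω φ - m * ∫ x in Ω, w x * φ x ^ 2) / ∫ x in Ω, w x * φ x ^ 2}

theorem integral_rpow_sub_one_mul_le {X : Type*} [MeasurableSpace X] {μ : Measure X}
    {a f : X → ℝ} {p : ℝ} (hp : 1 ≤ p) (ha : 0 ≤ᵐ[μ] a) (hf : 0 ≤ᵐ[μ] f)
    (ha_mass : ∫ x, a x ^ p ∂μ = 1)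
    (ha_mem : MemLp (fun x => a x ^ (p - 1)) (ENNReal.ofReal p.conjExponent) μ)
    (hf_mem : MemLp f (ENNReal.ofReal p) μ) :
    ∫ x, a x ^ (p - 1) * f x ∂μ ≤ (∫ x, f x ^ p ∂μ) ^ (1 / p) := by
  rcases hp.eq_or_lt with rfl | hp
  · simp
  have hpq : p.conjExponent.HolderConjugate p := (Real.HolderConjugate.conjExponent hp).symm
  have ha_pow : ∫ x, (a x ^ (p - 1)) ^ p.conjExponent ∂μ = 1 := by
    refine (integral_congr_ae (ha.mono fun x hx => ?_)).trans ha_mass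
    rw [← rpow_mul hx, conjExponent, mul_div_cancel₀ _ (sub_pos.2 hp).ne']
  have hw : 0 ≤ᵐ[μ] fun x => a x ^ (p - 1) := ha.mono fun x hx => rpow_nonneg hx _
  simpa [ha_pow] using integral_mul_le_Lp_mul_Lq_of_nonneg hpq hw hf ha_mem hf_mem

theorem Continuous.memLp_restrict_of_isBounded {X E : Type*} [MetricSpace X] [ProperSpace X]
    [MeasurableSpace X] [BorelSpace X] [NormedAddCommGroup E] [SecondCountableTopology E]
    {μ : Measure X} [IsFiniteMeasureOnCompacts μ] {s : Set X} (hs : IsBounded s) {g : X → E}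
    (hg : Continuous g) (q : ENNReal) : MemLp g q (μ.restrict s) := by
  have hK := hs.isCompact_closure
  have : IsFiniteMeasure (μ.restrict (closure s)) :=
    isFiniteMeasure_restrict.2 hK.measure_lt_top.ne
  obtain ⟨C, hC⟩ := hK.exists_bound_of_continuousOn hg.continuousOn
  exact (MemLp.of_bound hg.aestronglyMeasurable C
    (ae_restrict_of_forall_mem isClosed_closure.measurableSet hC)).mono_measure
    (Measure.restrict_mono subset_closure le_rfl)

theorem IsOpen.setIntegral_pos_of_continuous {X : Type*} [TopologicalSpace X] [MeasurableSpace X]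
    [OpensMeasurableSpace X] {μ : Measure X} [μ.IsOpenPosMeasure] {U : Set X} (hU : IsOpen U)
    {g : X → ℝ} (hg : Continuous g) (hgi : IntegrableOn g U μ) (hnn : ∀ x ∈ U, 0 ≤ g x)
    {x : X} (hxU : x ∈ U) (hgx : g x ≠ 0) : 0 < ∫ y in U, g y ∂μ :=
  (setIntegral_pos_iff_support_of_nonneg_ae (ae_restrict_of_forall_mem hU.measurableSet hnn)
    hgi).2 ((hg.isOpen_support.inter hU).measure_pos μ ⟨x, hgx, hxU⟩)

section TestFunctions

variable {N : ℕ} {Ω : Set (EN N)} {φ : EN N → ℝ}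

theorem exists_testfun (hΩ : IsOpen Ω) (hne : Ω.Nonempty) : ∃ φ, testfun Ω φ := by
  obtain ⟨x₀, hx₀⟩ := hne
  obtain ⟨ε, hε, hball⟩ := Metric.isOpen_iff.mp hΩ x₀ hx₀
  let b : ContDiffBump x₀ := ⟨ε / 2, ε, half_pos hε, half_lt_self hε⟩
  refine ⟨b, b.contDiff, fun x hx => b.zero_of_le_dist ?_, x₀, hx₀, ?_⟩
  · exact not_lt.1 fun h => hx (hball (Metric.mem_ball.2 h))
  · simp [b.one_of_mem_closedBall (Metric.mem_closedBall_self b.rIn_pos.le)]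

theorem sobolevConst_mul_le_dirE {p : ℝ} (hφ : testfun Ω φ) :
    sobolevConst Ω p * (∫ x in Ω, |φ x| ^ (2 * p)) ^ (1 / p) ≤ dirE Ω φ := by
  have hbdd : BddBelow {r : ℝ | ∃ φ : EN N → ℝ, testfun Ω φ ∧
      r = dirE Ω φ / (∫ x in Ω, |φ x| ^ (2 * p)) ^ (1 / p)} :=
    ⟨0, by rintro r ⟨φ, -, rfl⟩; unfold dirE; positivity⟩
  exact mul_le_of_le_div₀ (by unfold dirE; positivity) (by positivity)
    (csInf_le hbdd ⟨φ, hφ, rfl⟩)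

theorem sub_le_firstEigenvalue {w : EN N → ℝ} {c m : ℝ} (hne : ∃ φ, testfun Ω φ)
    (h : ∀ φ, testfun Ω φ →
      0 < ∫ x in Ω, w x * φ x ^ 2 ∧ c * ∫ x in Ω, w x * φ x ^ 2 ≤ dirE Ω φ) :
    c - m ≤ firstEigenvalue Ω w m := by
  obtain ⟨φ₀, hφ₀⟩ := hne
  refine le_csInf ⟨_, φ₀, hφ₀, rfl⟩ ?_
  rintro r ⟨φ, hφ, rfl⟩
  obtain ⟨hpos, hle⟩ := h φ hφ
  rw [le_div_iff₀ hpos]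
  linarith

theorem setIntegral_mul_sq_pos {w : EN N → ℝ} (hΩo : IsOpen Ω) (hΩb : IsBounded Ω)
    (hw : Continuous w) (hw_pos : ∀ x ∈ Ω, 0 < w x) (hφ : testfun Ω φ) :
    0 < ∫ x in Ω, w x * φ x ^ 2 := by
  obtain ⟨x₀, hx₀, hφx₀⟩ := hφ.2.2
  have hg := hw.mul (hφ.1.continuous.pow 2)
  exact hΩo.setIntegral_pos_of_continuous hg
    (memLp_one_iff_integrable.1 (hg.memLp_restrict_of_isBounded hΩb 1))
    (fun x hx => mul_nonneg (hw_pos x hx).le (sq_nonneg _)) hx₀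
    (mul_ne_zero (hw_pos x₀ hx₀).ne' (pow_ne_zero 2 hφx₀))

theorem setIntegral_rpow_sub_one_mul_sq_le {p : ℝ} {a : EN N → ℝ} (hΩm : MeasurableSet Ω)
    (hΩb : IsBounded Ω) (hp : 1 ≤ p) (ha : Continuous a) (ha_nonneg : ∀ x ∈ Ω, 0 ≤ a x)
    (ha_mass : ∫ x in Ω, a x ^ p = 1) (hφ : Continuous φ) :
    ∫ x in Ω, a x ^ (p - 1) * φ x ^ 2 ≤ (∫ x in Ω, |φ x| ^ (2 * p)) ^ (1 / p) := by
  have hsq : ∀ x, (φ x ^ 2) ^ p = |φ x| ^ (2 * p) := fun x => by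
    rw [rpow_mul (abs_nonneg _), ← sq_abs, rpow_two]
  simp_rw [← hsq]
  refine integral_rpow_sub_one_mul_le hp (ae_restrict_of_forall_mem hΩm ha_nonneg)
    (ae_of_all _ fun x => sq_nonneg (φ x)) ha_mass ?_ ?_
  · exact (ha.rpow_const fun _ => Or.inr (sub_nonneg.2 hp)).memLp_restrict_of_isBounded hΩb _
  · exact (hφ.pow 2).memLp_restrict_of_isBounded hΩb _

end TestFunctions

theorem stmt5_general {N : ℕ} (Ω : Set (EN N)) (hΩo : IsOpen Ω) (hΩb : IsBounded Ω)
    (hvol : volume Ω = 1)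
    (p lam : ℝ) (hp : 1 ≤ p) (hlam : 0 ≤ lam)
    (α : ℝ) (ψ : EN N → ℝ) (hψ : ContDiff ℝ 2 ψ)
    (w : EN N → ℝ) (hw : w = fun x => (α + lam * ψ x) ^ (p - 1))
    (hmass : (∫ x in Ω, (α + lam * ψ x) ^ p) = 1)
    (hψpos : ∀ x ∈ Ω, 0 < ψ x) (hα : 0 ≤ α)
    (Λ : ℝ)
    (hΛ : Λ = sInf {r : ℝ | ∃ φ : EN N → ℝ, testfun Ω φ ∧
        r = dirE Ω φ / (∫ x in Ω, |φ x| ^ (2 * p)) ^ (1 / p)})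
    (hsub : lam * p ≤ Λ) :
    Λ - lam * p ≤
      sInf {r : ℝ | ∃ φ : EN N → ℝ, testfun Ω φ ∧
        r = (dirE Ω φ - lam * p * ∫ x in Ω, w x * φ x ^ 2) / ∫ x in Ω, w x * φ x ^ 2} ∧
    0 ≤ sInf {r : ℝ | ∃ φ : EN N → ℝ, testfun Ω φ ∧
        r = (dirE Ω φ - lam * p * ∫ x in Ω, w x * φ x ^ 2) / ∫ x in Ω, w x * φ x ^ 2} := by
  have ha : Continuous fun x => α + lam * ψ x := by fun_prop
  -- `α = λ = 0` would make the mass vanish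
  have ha_pos : ∀ x ∈ Ω, 0 < α + lam * ψ x := by
    have hpos : 0 < α ∨ 0 < lam := by
      by_contra! h
      simp [le_antisymm h.1 hα, le_antisymm h.2 hlam, zero_rpow (by linarith : p ≠ 0)] at hmass
    intro x hx
    have := hψpos x hx
    rcases hpos with h | h <;> positivity
  have hw_cont : Continuous w := hw ▸ ha.rpow_const fun _ => Or.inr (by linarith)
  have hw_pos : ∀ x ∈ Ω, 0 < w x := fun x hx => hw ▸ rpow_pos_of_pos (ha_pos x hx) _
  have hΛ_nonneg : 0 ≤ Λ := (mul_nonneg hlam (by linarith)).trans hsub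
  have key : ∀ φ, testfun Ω φ →
      0 < ∫ x in Ω, w x * φ x ^ 2 ∧ Λ * ∫ x in Ω, w x * φ x ^ 2 ≤ dirE Ω φ := fun φ hφ =>
    ⟨setIntegral_mul_sq_pos hΩo hΩb hw_cont hw_pos hφ, calc
      Λ * ∫ x in Ω, w x * φ x ^ 2 ≤ Λ * (∫ x in Ω, |φ x| ^ (2 * p)) ^ (1 / p) :=
        mul_le_mul_of_nonneg_left (hw ▸ setIntegral_rpow_sub_one_mul_sq_le hΩo.measurableSet hΩb hp ha
          (fun x hx => (ha_pos x hx).le) hmass hφ.1.continuous) hΛ_nonneg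
      _ ≤ dirE Ω φ := hΛ ▸ sobolevConst_mul_le_dirE hφ⟩
  have hΩne : Ω.Nonempty := nonempty_of_measure_ne_zero (μ := volume) (by simp [hvol])
  have hν := sub_le_firstEigenvalue (m := lam * p) (exists_testfun hΩo hΩne) key
  exact ⟨hν, (sub_nonneg.2 hsub).trans hν⟩

/-- If `(α,ψ)` solves (P)_λ and `λp ≤ Λ(Ω,2p)` (the best Sobolev constant of
`H¹₀(Ω) ↪ L^{2p}(Ω)`), then the standard first eigenvalue `ν_{1,λ}` of the linearization
is nonnegative; more precisely `ν_{1,λ} ≥ Λ(Ω,2p) − λp`. -/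
theorem stmt5 {N : ℕ} (Ω : Set (EN N)) (hΩo : IsOpen Ω) (hΩb : IsBounded Ω)
    (hvol : volume Ω = 1)
    (p q lam : ℝ) (hp : 1 ≤ p) (hq : 1 / p + 1 / q = 1) (hlam : 0 ≤ lam)
    (α : ℝ) (ψ : EN N → ℝ) (hψ : ContDiff ℝ 2 ψ)
    (w : EN N → ℝ) (hw : w = fun x => (α + lam * ψ x) ^ (p - 1))
    (heqP : ∀ x ∈ Ω, -lap ψ x = (α + lam * ψ x) ^ p)
    (hmass : (∫ x in Ω, (α + lam * ψ x) ^ p) = 1)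
    (hψpos : ∀ x ∈ Ω, 0 < ψ x) (hψbd : ∀ x ∈ frontier Ω, ψ x = 0) (hα : 0 ≤ α)
    (Λ : ℝ)
    (hΛ : Λ = sInf {r : ℝ | ∃ φ : EN N → ℝ, testfun Ω φ ∧
        r = dirE Ω φ / (∫ x in Ω, |φ x| ^ (2 * p)) ^ (1 / p)})
    (hsub : lam * p ≤ Λ) :
    Λ - lam * p ≤
      sInf {r : ℝ | ∃ φ : EN N → ℝ, testfun Ω φ ∧
        r = (dirE Ω φ - lam * p * ∫ x in Ω, w x * φ x ^ 2) / ∫ x in Ω, w x * φ x ^ 2} ∧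
    0 ≤ sInf {r : ℝ | ∃ φ : EN N → ℝ, testfun Ω φ ∧
        r = (dirE Ω φ - lam * p * ∫ x in Ω, w x * φ x ^ 2) / ∫ x in Ω, w x * φ x ^ 2} :=
  stmt5_general Ω hΩo hΩb hvol p lam hp hlam α ψ hψ w hw hmass hψpos hα Λ hΛ hsub
end
end

section
/- In the setting of the small-λ construction: for each fixed λ ∈ (0, λ̄], the function g(α) = ∫_Ω (α + u_{λ,α})^p is continuous and strictly increasing on (0,1], satisfies limsup_{α→0} g(α) ≤ ¼ and g(1) > 1 (for λ̄ small enough so that (2C₁λ̄)^p ≤ ¼), and hence there exists a unique α_λ ∈ (0,1] with g(α_λ) = 1; moreover this α_λ satisfies α_λ ≥ (3/4)^{1/p}/2 > 1/3. -/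
open MeasureTheory Real Bornology Set

noncomputable section

/-!
Since `0 ≤ u_{λ,α} ≤ M := C₁ λ̄`, the elementary bound `(a + b)^p ≤ 2^p (a^p + b^p)` gives
`g(α) ≤ 2^p α^p + (2M)^p ≤ 2^p α^p + 1/4`; this yields the `limsup`, the value `g(1/4) ≤ 3/4`
needed for the intermediate value theorem, and, at `g(α_λ) = 1`, the lower bound `(2α_λ)^p ≥ 3/4`.
Continuity is dominated convergence and strict monotonicity is pointwise. For `g(1) > 1`, the
integrand `(1 + u_{λ,1})^p` is `≥ 1` and is `> 1` on a nonempty open set: `u_{λ,1}` cannot vanish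
on `Ω`, since then its Laplacian would vanish too, whereas `-Δu_{λ,1} = λ(1 + u_{λ,1})^p > 0`.
-/

open Filter Topology

theorem rpow_add_le_two_rpow_mul_add {a b p : ℝ} (ha : 0 ≤ a) (hb : 0 ≤ b) (hp : 0 ≤ p) :
    (a + b) ^ p ≤ 2 ^ p * (a ^ p + b ^ p) := by
  have hmax : (a + b) ^ p ≤ (2 * max a b) ^ p :=
    Real.rpow_le_rpow (by positivity) (by linarith [le_max_left a b, le_max_right a b]) hp
  have hmax_le : max a b ^ p ≤ a ^ p + b ^ p := by
    rcases le_total a b with h | h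
    · simpa [max_eq_right h] using Real.rpow_nonneg ha p
    · simpa [max_eq_left h] using Real.rpow_nonneg hb p
  calc (a + b) ^ p ≤ 2 ^ p * max a b ^ p := by
        rwa [Real.mul_rpow zero_le_two (le_max_of_le_left ha)] at hmax
    _ ≤ 2 ^ p * (a ^ p + b ^ p) := by gcongr

theorem add_rpow_le_of_le {a b M p : ℝ} (ha : 0 ≤ a) (hb : 0 ≤ b) (hbM : b ≤ M) (hp : 0 ≤ p) :
    (a + b) ^ p ≤ 2 ^ p * a ^ p + (2 * M) ^ p := by
  rw [Real.mul_rpow zero_le_two (hb.trans hbM), ← mul_add]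
  calc (a + b) ^ p ≤ 2 ^ p * (a ^ p + b ^ p) := rpow_add_le_two_rpow_mul_add ha hb hp
    _ ≤ 2 ^ p * (a ^ p + M ^ p) := by gcongr

theorem setIntegral_pos_of_continuousOn {X : Type*} [TopologicalSpace X] [MeasurableSpace X]
    [OpensMeasurableSpace X] {μ : Measure X} [μ.IsOpenPosMeasure] {U : Set X} {f : X → ℝ} {y : X}
    (hU : IsOpen U) (hfc : ContinuousOn f U) (hfi : IntegrableOn f U μ)
    (hf0 : ∀ x ∈ U, 0 ≤ f x) (hy : y ∈ U) (hfy : f y ≠ 0) : 0 < ∫ x in U, f x ∂μ := by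
  rw [setIntegral_pos_iff_support_of_nonneg_ae (ae_restrict_of_forall_mem hU.measurableSet hf0) hfi]
  refine ((hfc.isOpen_inter_preimage hU isOpen_compl_singleton).measure_pos μ ⟨y, hy, hfy⟩).trans_le
    (measure_mono fun x hx => ⟨hx.2, hx.1⟩)

theorem setIntegral_lt_setIntegral_of_continuousOn {X : Type*} [TopologicalSpace X]
    [MeasurableSpace X] [OpensMeasurableSpace X] {μ : Measure X} [μ.IsOpenPosMeasure] {U : Set X}
    {f g : X → ℝ} {y : X} (hU : IsOpen U) (hfc : ContinuousOn f U) (hgc : ContinuousOn g U)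
    (hfi : IntegrableOn f U μ) (hgi : IntegrableOn g U μ) (hle : ∀ x ∈ U, f x ≤ g x) (hy : y ∈ U)
    (hlt : f y < g y) : ∫ x in U, f x ∂μ < ∫ x in U, g x ∂μ := by
  have hpos : 0 < ∫ x in U, (g x - f x) ∂μ :=
    setIntegral_pos_of_continuousOn hU (hgc.sub hfc) (hgi.sub hfi)
      (fun x hx => sub_nonneg.2 (hle x hx)) hy (sub_pos.2 hlt).ne'
  rwa [integral_sub hgi hfi, sub_pos] at hpos

theorem lap_eq_zero_of_eqOn_zero {N : ℕ} {Ω : Set (EN N)} {f : EN N → ℝ} {x : EN N}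
    (hΩ : IsOpen Ω) (hf : EqOn f 0 Ω) (hx : x ∈ Ω) : lap f x = 0 := by
  have hfx : f =ᶠ[𝓝 x] fun _ => (0 : ℝ) := eventually_of_mem (hΩ.mem_nhds hx) hf
  simp [lap, (hfx.iteratedFDeriv ℝ 2).eq_of_nhds, iteratedFDeriv_const_of_ne two_ne_zero]

theorem exists_ne_zero_of_lap_ne_zero {N : ℕ} {Ω : Set (EN N)} {f : EN N → ℝ} {x : EN N}
    (hΩ : IsOpen Ω) (hx : x ∈ Ω) (hf : lap f x ≠ 0) : ∃ y ∈ Ω, f y ≠ 0 := by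
  by_contra! h
  exact hf (lap_eq_zero_of_eqOn_zero hΩ h hx)

theorem existsUnique_eq_of_strictMonoOn {f : ℝ → ℝ} {s : Set ℝ} {a b c : ℝ} (hab : a ≤ b)
    (hs : Icc a b ⊆ s) (hf : ContinuousOn f s) (hmono : StrictMonoOn f s) (ha : f a ≤ c)
    (hb : c ≤ f b) : ∃! x, x ∈ s ∧ f x = c := by
  obtain ⟨x, hx, hfx⟩ := intermediate_value_Icc hab (hf.mono hs) ⟨ha, hb⟩
  exact ⟨x, ⟨hs hx, hfx⟩, fun y ⟨hy, hfy⟩ => hmono.injOn hy (hs hx) (hfy.trans hfx.symm)⟩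

section AddRpow

variable {X : Type*} [MeasurableSpace X] {μ : Measure X} {u : ℝ → X → ℝ} {p M : ℝ}

theorem integrable_add_rpow [IsFiniteMeasure μ] {a : ℝ} {v : X → ℝ} (ha : 0 ≤ a) (hp : 0 ≤ p)
    (hv : Measurable v) (hv0 : ∀ x, 0 ≤ v x) (hvM : ∀ x, v x ≤ M) :
    Integrable (fun x => (a + v x) ^ p) μ := by
  refine Integrable.of_bound ((hv.const_add a).pow_const p).aestronglyMeasurable ((a + M) ^ p)
    (.of_forall fun x => ?_)
  rw [Real.norm_of_nonneg (by have := hv0 x; positivity)]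
  exact Real.rpow_le_rpow (by linarith [hv0 x]) (by linarith [hvM x]) hp

theorem integral_add_rpow_le [IsProbabilityMeasure μ] {a : ℝ} {v : X → ℝ} (ha : 0 ≤ a)
    (hp : 0 ≤ p) (hv0 : ∀ x, 0 ≤ v x) (hvM : ∀ x, v x ≤ M) :
    ∫ x, (a + v x) ^ p ∂μ ≤ 2 ^ p * a ^ p + (2 * M) ^ p := by
  calc ∫ x, (a + v x) ^ p ∂μ ≤ ∫ _, (2 ^ p * a ^ p + (2 * M) ^ p) ∂μ :=
        integral_mono_of_nonneg (.of_forall fun x => by have := hv0 x; positivity)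
          (integrable_const _) (.of_forall fun x => add_rpow_le_of_le ha (hv0 x) (hvM x) hp)
    _ = 2 ^ p * a ^ p + (2 * M) ^ p := by simp

variable (hu0 : ∀ a ∈ Ioc (0 : ℝ) 1, ∀ x, 0 ≤ u a x) (huM : ∀ a ∈ Ioc (0 : ℝ) 1, ∀ x, u a x ≤ M)
include hu0 huM

theorem continuousOn_integral_add_rpow [IsFiniteMeasure μ] (hp : 0 ≤ p)
    (hmeas : ∀ a ∈ Ioc (0 : ℝ) 1, Measurable (u a))
    (hcont : ∀ x, ContinuousOn (fun a => u a x) (Ioc 0 1)) :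
    ContinuousOn (fun a => ∫ x, (a + u a x) ^ p ∂μ) (Ioc 0 1) := by
  refine continuousOn_of_dominated (bound := fun _ => (1 + M) ^ p)
    (fun a ha => (integrable_add_rpow ha.1.le hp (hmeas a ha) (hu0 a ha) (huM a ha)).1)
    (fun a ha => .of_forall fun x => ?_) (integrable_const _)
    (.of_forall fun x => (continuousOn_id.add (hcont x)).rpow_const fun _ _ => Or.inr hp)
  rw [Real.norm_of_nonneg (by have := hu0 a ha x; have := ha.1; positivity)]
  exact Real.rpow_le_rpow (by linarith [hu0 a ha x, ha.1]) (by linarith [huM a ha x, ha.2]) hp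

theorem limsup_integral_add_rpow_le [IsProbabilityMeasure μ] (hp : 0 < p) :
    limsup (fun a => ∫ x, (a + u a x) ^ p ∂μ) (𝓝[>] 0) ≤ (2 * M) ^ p := by
  have hev : ∀ᶠ a in 𝓝[>] (0 : ℝ), a ∈ Ioc (0 : ℝ) 1 :=
    eventually_of_mem (Ioo_mem_nhdsGT one_pos) fun a ha => ⟨ha.1, ha.2.le⟩
  have htend : Tendsto (fun a : ℝ => 2 ^ p * a ^ p + (2 * M) ^ p) (𝓝[>] 0) (𝓝 ((2 * M) ^ p)) := by
    have h0 : Tendsto (fun a : ℝ => a ^ p) (𝓝[>] 0) (𝓝 0) := by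
      simpa [Real.zero_rpow hp.ne'] using
        (Real.continuousAt_rpow_const 0 p (Or.inr hp.le)).tendsto.mono_left nhdsWithin_le_nhds
    simpa using (h0.const_mul (2 ^ p)).add_const ((2 * M) ^ p)
  calc limsup (fun a => ∫ x, (a + u a x) ^ p ∂μ) (𝓝[>] 0)
      ≤ limsup (fun a : ℝ => 2 ^ p * a ^ p + (2 * M) ^ p) (𝓝[>] 0) :=
        limsup_le_limsup
          (hev.mono fun a ha => integral_add_rpow_le ha.1.le hp.le (hu0 a ha) (huM a ha))
          (isCoboundedUnder_le_of_eventually_le _ (hev.mono fun a ha =>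
            integral_nonneg fun x => by have := hu0 a ha x; have := ha.1; positivity))
          htend.isBoundedUnder_le
    _ = (2 * M) ^ p := htend.limsup_eq

theorem strictMonoOn_setIntegral_add_rpow [TopologicalSpace X] [OpensMeasurableSpace X]
    [μ.IsOpenPosMeasure] {U : Set X} [IsFiniteMeasure (μ.restrict U)] (hU : IsOpen U)
    (hUne : U.Nonempty) (hp : 0 < p) (huc : ∀ a ∈ Ioc (0 : ℝ) 1, Continuous (u a))
    (hmono : ∀ a b : ℝ, 0 < a → a ≤ b → b ≤ 1 → ∀ x, u a x ≤ u b x) :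
    StrictMonoOn (fun a => ∫ x in U, (a + u a x) ^ p ∂μ) (Ioc 0 1) := by
  intro a ha b hb hab
  have hcont : ∀ c ∈ Ioc (0 : ℝ) 1, ContinuousOn (fun x => (c + u c x) ^ p) U := fun c hc =>
    ((huc c hc).const_add c |>.rpow_const fun _ => Or.inr hp.le).continuousOn
  have hint : ∀ c ∈ Ioc (0 : ℝ) 1, IntegrableOn (fun x => (c + u c x) ^ p) U μ := fun c hc =>
    integrable_add_rpow hc.1.le hp.le (huc c hc).measurable (hu0 c hc) (huM c hc)
  have hlt : ∀ x, (a + u a x) ^ p < (b + u b x) ^ p := fun x =>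
    Real.rpow_lt_rpow (by linarith [hu0 a ha x, ha.1])
      (by linarith [hmono a b ha.1 hab.le hb.2 x]) hp
  obtain ⟨y, hy⟩ := hUne
  exact setIntegral_lt_setIntegral_of_continuousOn hU (hcont a ha) (hcont b hb) (hint a ha)
    (hint b hb) (fun x _ => (hlt x).le) hy (hlt y)

end AddRpow

theorem one_lt_setIntegral_one_add_rpow {X : Type*} [TopologicalSpace X] [MeasurableSpace X]
    [OpensMeasurableSpace X] {μ : Measure X} [μ.IsOpenPosMeasure] {U : Set X}
    [IsProbabilityMeasure (μ.restrict U)] {v : X → ℝ} {p M : ℝ} {y : X} (hU : IsOpen U)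
    (hp : 0 < p) (hv : Continuous v) (hv0 : ∀ x, 0 ≤ v x) (hvM : ∀ x, v x ≤ M) (hy : y ∈ U)
    (hvy : v y ≠ 0) : 1 < ∫ x in U, (1 + v x) ^ p ∂μ := by
  simpa using setIntegral_lt_setIntegral_of_continuousOn (μ := μ) (f := fun _ => 1) hU
    continuousOn_const ((hv.const_add 1).rpow_const fun _ => Or.inr hp.le).continuousOn
    (integrable_const 1) (integrable_add_rpow zero_le_one hp.le hv.measurable hv0 hvM)
    (fun x _ => Real.one_le_rpow (by linarith [hv0 x]) hp.le) hy
    (Real.one_lt_rpow (by linarith [(hv0 y).lt_of_ne' hvy]) hp)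

theorem three_quarters_rpow_div_two_le {a p : ℝ} (ha : 0 ≤ a) (hp : 0 < p)
    (h : 3 / 4 ≤ 2 ^ p * a ^ p) : (3 / 4 : ℝ) ^ (1 / p) / 2 ≤ a := by
  rw [← Real.mul_rpow zero_le_two ha] at h
  rw [div_le_iff₀ two_pos, mul_comm, one_div]
  exact (Real.rpow_inv_le_iff_of_pos (by norm_num) (by positivity) hp).2 h

theorem one_third_lt_three_quarters_rpow_div_two {p : ℝ} (hp : 1 ≤ p) :
    1 / 3 < (3 / 4 : ℝ) ^ (1 / p) / 2 := by
  have : (3 / 4 : ℝ) ≤ (3 / 4) ^ (1 / p) := by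
    simpa using Real.rpow_le_rpow_of_exponent_ge (x := 3 / 4) (by norm_num) (by norm_num)
      ((div_le_one (by linarith)).2 hp)
  linarith

theorem two_rpow_mul_one_quarter_rpow_le {p : ℝ} (hp : 1 ≤ p) :
    (2 : ℝ) ^ p * (1 / 4) ^ p ≤ 1 / 2 := by
  rw [← Real.mul_rpow zero_le_two (by norm_num), show (2 : ℝ) * (1 / 4) = 1 / 2 by norm_num]
  simpa using Real.rpow_le_rpow_of_exponent_ge (x := 1 / 2) (by norm_num) (by norm_num) hp

theorem stmt14_general {N : ℕ} (Ω : Set (EN N)) (hΩo : IsOpen Ω)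
    (hvol : volume Ω = 1)
    (p C₁ lb : ℝ) (hp : 1 ≤ p)
    (lam : ℝ) (hlam : lam ∈ Set.Ioc 0 lb)
    (u : ℝ → EN N → ℝ)
    (hsol : ∀ a ∈ Set.Ioc (0 : ℝ) 1,
      ContDiff ℝ 2 (u a) ∧
      (∀ x ∈ Ω, -lap (u a) x = lam * (a + u a x) ^ p) ∧
      (∀ x ∈ frontier Ω, u a x = 0) ∧
      (∀ x, 0 ≤ u a x) ∧ (∀ x, |u a x| ≤ C₁ * lb))
    (hcont : ∀ x, ContinuousOn (fun a => u a x) (Set.Ioc 0 1))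
    (hmono : ∀ a b : ℝ, 0 < a → a ≤ b → b ≤ 1 → ∀ x, u a x ≤ u b x)
    (hsmall : (2 * C₁ * lb) ^ p ≤ 1 / 4) :
    ContinuousOn (fun a => ∫ x in Ω, (a + u a x) ^ p) (Set.Ioc 0 1) ∧
    StrictMonoOn (fun a => ∫ x in Ω, (a + u a x) ^ p) (Set.Ioc 0 1) ∧
    Filter.limsup (fun a => ∫ x in Ω, (a + u a x) ^ p) (nhdsWithin 0 (Set.Ioi 0)) ≤ 1 / 4 ∧
    1 < ∫ x in Ω, (1 + u 1 x) ^ p ∧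
    (∃! a : ℝ, a ∈ Set.Ioc (0 : ℝ) 1 ∧ (∫ x in Ω, (a + u a x) ^ p) = 1) ∧
    (∀ a ∈ Set.Ioc (0 : ℝ) 1, (∫ x in Ω, (a + u a x) ^ p) = 1 →
      (3 / 4 : ℝ) ^ (1 / p) / 2 ≤ a ∧ 1 / 3 < a) := by
  have : IsProbabilityMeasure (volume.restrict Ω) := ⟨by simp [hvol]⟩
  have hp0 : 0 < p := by linarith
  rw [mul_assoc] at hsmall
  have hu0 (a) (ha : a ∈ Ioc (0 : ℝ) 1) := (hsol a ha).2.2.2.1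
  have huM (a) (ha : a ∈ Ioc (0 : ℝ) 1) (x) : u a x ≤ C₁ * lb :=
    (abs_le.1 ((hsol a ha).2.2.2.2 x)).2
  have huc (a) (ha : a ∈ Ioc (0 : ℝ) 1) : Continuous (u a) := (hsol a ha).1.continuous
  have hg_le (a) (ha : a ∈ Ioc (0 : ℝ) 1) : ∫ x in Ω, (a + u a x) ^ p ≤ 2 ^ p * a ^ p + 1 / 4 :=
    (integral_add_rpow_le ha.1.le hp0.le (hu0 a ha) (huM a ha)).trans (by linarith)
  have hg_cont := continuousOn_integral_add_rpow hu0 huM hp0.le (fun a ha => (huc a ha).measurable)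
    hcont (μ := volume.restrict Ω)
  have hΩne : Ω.Nonempty := nonempty_of_measure_ne_zero (μ := volume) (by simp [hvol])
  have hg_mono := strictMonoOn_setIntegral_add_rpow hu0 huM hΩo hΩne hp0 huc hmono (μ := volume)
  have h1 : (1 : ℝ) ∈ Ioc (0 : ℝ) 1 := right_mem_Ioc.2 one_pos
  obtain ⟨x₀, hx₀⟩ := hΩne
  have hlap : lap (u 1) x₀ ≠ 0 := fun h => by
    have hpde := (hsol 1 h1).2.1 x₀ hx₀
    have : 0 < lam * (1 + u 1 x₀) ^ p := by have := hu0 1 h1 x₀; have := hlam.1; positivity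
    linarith
  obtain ⟨y, hy, huy⟩ := exists_ne_zero_of_lap_ne_zero hΩo hx₀ hlap
  have hg1 : 1 < ∫ x in Ω, (1 + u 1 x) ^ p :=
    one_lt_setIntegral_one_add_rpow hΩo hp0 (huc 1 h1) (hu0 1 h1) (huM 1 h1) hy huy
  refine ⟨hg_cont, hg_mono, (limsup_integral_add_rpow_le hu0 huM hp0).trans hsmall, hg1,
    existsUnique_eq_of_strictMonoOn (by norm_num) (fun a ha => ⟨by linarith [ha.1], ha.2⟩) hg_cont
      hg_mono ((hg_le (1 / 4) (by norm_num)).trans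
        (by linarith [two_rpow_mul_one_quarter_rpow_le hp])) hg1.le,
    fun a ha hga => ?_⟩
  have ha' := three_quarters_rpow_div_two_le ha.1.le hp0 (by linarith [hg_le a ha])
  exact ⟨ha', (one_third_lt_three_quarters_rpow_div_two hp).trans_le ha'⟩

/-- for fixed `λ ∈ (0,λ̄]`, the function `g(α) = ∫_Ω (α+u_{λ,α})^p` is
continuous and strictly increasing on `(0,1]`, `limsup_{α→0⁺} g ≤ ¼`, `g(1) > 1`, hence
there is a unique `α_λ ∈ (0,1]` with `g(α_λ) = 1`, and it satisfies
`α_λ ≥ (3/4)^{1/p}/2 > 1/3`. -/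
theorem stmt14 {N : ℕ} (Ω : Set (EN N)) (hΩo : IsOpen Ω) (hΩb : IsBounded Ω)
    (hvol : volume Ω = 1)
    (p C₁ lb : ℝ) (hp : 1 ≤ p) (hC₁ : 0 < C₁) (hlb : 0 < lb)
    (lam : ℝ) (hlam : lam ∈ Set.Ioc 0 lb)
    (u : ℝ → EN N → ℝ)
    (hsol : ∀ a ∈ Set.Ioc (0 : ℝ) 1,
      ContDiff ℝ 2 (u a) ∧
      (∀ x ∈ Ω, -lap (u a) x = lam * (a + u a x) ^ p) ∧
      (∀ x ∈ frontier Ω, u a x = 0) ∧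
      (∀ x, 0 ≤ u a x) ∧ (∀ x, |u a x| ≤ C₁ * lb))
    (hcont : ∀ x, ContinuousOn (fun a => u a x) (Set.Ioc 0 1))
    (hmono : ∀ a b : ℝ, 0 < a → a ≤ b → b ≤ 1 → ∀ x, u a x ≤ u b x)
    (hsmall : (2 * C₁ * lb) ^ p ≤ 1 / 4) :
    ContinuousOn (fun a => ∫ x in Ω, (a + u a x) ^ p) (Set.Ioc 0 1) ∧
    StrictMonoOn (fun a => ∫ x in Ω, (a + u a x) ^ p) (Set.Ioc 0 1) ∧
    Filter.limsup (fun a => ∫ x in Ω, (a + u a x) ^ p) (nhdsWithin 0 (Set.Ioi 0)) ≤ 1 / 4 ∧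
    1 < ∫ x in Ω, (1 + u 1 x) ^ p ∧
    (∃! a : ℝ, a ∈ Set.Ioc (0 : ℝ) 1 ∧ (∫ x in Ω, (a + u a x) ^ p) = 1) ∧
    (∀ a ∈ Set.Ioc (0 : ℝ) 1, (∫ x in Ω, (a + u a x) ^ p) = 1 →
      (3 / 4 : ℝ) ^ (1 / p) / 2 ≤ a ∧ 1 / 3 < a) :=
  stmt14_general Ω hΩo hvol p C₁ lb hp lam hlam u hsol hcont hmono hsmall
end
end
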